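/- arXiv:math/0209037 — 7 statements merged into one kernel-verified Lean document; each statement's English description precedes it below -/
import Mathlib

section
/- Let E = F[t] be a finite field extension of degree k generated by an element t. Then every nonzero element of E can be written as f(t)/g(t) where f and g are polynomials over F of degree at most k/2. -/
/-!
Let `k = [E : F]`. The pairs `(f, g)` of polynomials of degree `≤ k/2` form an `F`-space of
dimension `2(⌊k/2⌋ + 1) > k`, so the linear map `(f, g) ↦ f(t) - e g(t)` into `E` has a nonzero
kernel element. Since `E = F[t]`, the minimal polynomial of `t` has degree `k > ⌊k/2⌋`, so no
nonzero polynomial of degree `≤ k/2` vanishes at `t`; hence `g(t) ≠ 0` and `e = f(t)/g(t)`.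
-/

open Polynomial Module

theorem Polynomial.finrank_degreeLE (F : Type*) [Field F] (n : ℕ) :
    finrank F (degreeLE F n) = n + 1 := by
  rw [← degreeLT_succ_eq_degreeLE, (degreeLTEquiv F (n + 1)).finrank_eq, finrank_fin_fun]

instance Polynomial.finiteDimensional_degreeLE (F : Type*) [Field F] (n : ℕ) :
    FiniteDimensional F (degreeLE F n) :=
  .of_finrank_pos (by rw [finrank_degreeLE]; omega)

theorem minpoly.eq_zero_of_aeval_eq_zero_of_natDegree_lt {F A : Type*} [Field F] [Ring A]
    [Algebra F A] {t : A} {p : F[X]} (hp : Polynomial.aeval t p = 0)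
    (hdeg : p.natDegree < (minpoly F t).natDegree) : p = 0 := by
  by_contra hp0
  have := natDegree_le_natDegree (minpoly.degree_le_of_ne_zero F t hp0 hp)
  omega

/-- Dimension count: `f(t) = e g(t)` is `dim A` linear conditions on the `2(n + 1)` coefficients
of `f` and `g`. -/
theorem exists_aeval_eq_mul_aeval_of_finrank_lt {F A : Type*} [Field F] [Ring A] [Algebra F A]
    [FiniteDimensional F A] (t e : A) {n : ℕ} (hn : finrank F A < 2 * (n + 1)) :
    ∃ f g : F[X], f.natDegree ≤ n ∧ g.natDegree ≤ n ∧ (f ≠ 0 ∨ g ≠ 0) ∧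
      aeval t f = e * aeval t g := by
  let evalAt : degreeLE F n →ₗ[F] A := (aeval t).toLinearMap ∘ₗ (degreeLE F n).subtype
  let φ : degreeLE F n × degreeLE F n →ₗ[F] A :=
    evalAt ∘ₗ LinearMap.fst F _ _ - LinearMap.mulLeft F e ∘ₗ evalAt ∘ₗ LinearMap.snd F _ _
  have hdim : finrank F A < finrank F (degreeLE F n × degreeLE F n) := by
    rw [finrank_prod, finrank_degreeLE]
    omega
  obtain ⟨⟨⟨f, hf⟩, ⟨g, hg⟩⟩, hker, hne⟩ :=
    Submodule.exists_mem_ne_zero_of_ne_bot (LinearMap.ker_ne_bot_of_finrank_lt (f := φ) hdim)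
  refine ⟨f, g, natDegree_le_iff_degree_le.2 (mem_degreeLE.1 hf),
    natDegree_le_iff_degree_le.2 (mem_degreeLE.1 hg), ?_, sub_eq_zero.1 hker⟩
  by_contra! h
  obtain ⟨rfl, rfl⟩ := h
  exact hne rfl

/-- Lemma 10: if `E = F[t]` is a finite field extension of degree `k`, every nonzero
element of `E` can be written as `f(t)/g(t)` with `f, g` polynomials of degree `≤ k/2`. -/
theorem stmt_0 (F E : Type*) [Field F] [Field E] [Algebra F E]
    [FiniteDimensional F E] (t : E) (ht : Algebra.adjoin F {t} = ⊤)
    (k : ℕ) (hk : k = Module.finrank F E) :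
    ∀ e : E, e ≠ 0 → ∃ f g : Polynomial F,
      2 * f.natDegree ≤ k ∧ 2 * g.natDegree ≤ k ∧
      Polynomial.aeval t g ≠ 0 ∧ e = Polynomial.aeval t f / Polynomial.aeval t g := by
  intro e _
  have hmin : (minpoly F t).natDegree = k := hk ▸
    (Field.primitive_element_iff_minpoly_natDegree_eq F t).1
      (IntermediateField.adjoin_eq_top_of_algebra F {t} ht)
  have hk0 : 0 < k := hk ▸ finrank_pos
  obtain ⟨f, g, hf, hg, hfg, hfeg⟩ :=
    exists_aeval_eq_mul_aeval_of_finrank_lt (F := F) t e (n := k / 2) (by omega)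
  have vanish {p : F[X]} (hp : p.natDegree ≤ k / 2) (h : aeval t p = 0) : p = 0 :=
    minpoly.eq_zero_of_aeval_eq_zero_of_natDegree_lt h (by omega)
  have hg0 : aeval t g ≠ 0 := fun h0 ↦ by
    rcases hfg with hf0 | hg0
    · exact hf0 (vanish hf (by rw [hfeg, h0, mul_zero]))
    · exact hg0 (vanish hg h0)
  exact ⟨f, g, by omega, by omega, hg0, by rw [hfeg, mul_div_cancel_right₀ _ hg0]⟩
end

section
/- Let Θ = {1,a,b,c} be the Klein four-group. There is an exact sequence of Z[Θ]-modules 0 → Z → Z[Θ] ⊕ Z → Z[Θ/⟨a⟩] ⊕ Z[Θ/⟨b⟩] ⊕ Z[Θ/⟨c⟩] → (Z⊕Z⊕Z)/Z → 0, where the first map sends 1 to (ΣΘ, -2), the middle map sends (x, n) to (pr_a(x) + n·Σ, pr_b(x) + n·Σ, pr_c(x) + n·Σ) with pr_θ the natural projection Z[Θ] → Z[Θ/⟨θ⟩] and Σ the sum of the two elements of Z[Θ/⟨θ⟩], and the last map sends each summand via augmentation to the corresponding coordinate of Z^3 modulo the diagonal copy of Z. -/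
/-! The Klein four-group `Θ = ℤ/2 × ℤ/2` with nontrivial elements `a = (1,0)`,
`b = (0,1)`, `c = (1,1)`.  We model `ℤ[Θ]` as functions `Θ → ℤ`, and `ℤ[Θ/⟨θ⟩]` as
functions `ZMod 2 → ℤ` via the coordinate invariant under `θ` (the second coordinate
for `a`, the first for `b`, their sum for `c`).  The target `ℤ³/ℤ` is `ℤ³` modulo the
diagonal copy of `ℤ`. -/

noncomputable abbrev stmt4Target : Type :=
  (ℤ × ℤ × ℤ) ⧸ Submodule.span ℤ {((1 : ℤ), (1 : ℤ), (1 : ℤ))}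

namespace KleinFourSequence

theorem forall_zmod_two {P : ZMod 2 → Prop} : (∀ i, P i) ↔ P 0 ∧ P 1 := Fin.forall_fin_two

def d₀ (n : ℤ) : (ZMod 2 × ZMod 2 → ℤ) × ℤ := (fun _ => n, -2 * n)

def d₁ (x : (ZMod 2 × ZMod 2 → ℤ) × ℤ) : (ZMod 2 → ℤ) × (ZMod 2 → ℤ) × (ZMod 2 → ℤ) :=
  (fun j => x.1 (0, j) + x.1 (1, j) + x.2,
   fun j => x.1 (j, 0) + x.1 (j, 1) + x.2,
   fun j => x.1 (0, j) + x.1 (1, j + 1) + x.2)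

def d₂ (y : (ZMod 2 → ℤ) × (ZMod 2 → ℤ) × (ZMod 2 → ℤ)) : stmt4Target :=
  Submodule.Quotient.mk (y.1 0 + y.1 1, y.2.1 0 + y.2.1 1, y.2.2 0 + y.2.2 1)

theorem injective_d₀ : Function.Injective d₀ := fun m n h => by
  simpa [d₀] using congrArg Prod.snd h

theorem d₁_d₀ (n : ℤ) : d₁ (d₀ n) = 0 := by
  ext j <;> simp only [d₁, d₀, Prod.fst_zero, Prod.snd_zero, Pi.zero_apply] <;> ring

/-- The six equations `d₁ x = 0` say that the rows, the columns and the two diagonals of the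
`2 × 2` matrix `x.1` all sum to `-x.2`, which forces `x.1` to be constant. -/
theorem eq_d₀_of_d₁_eq_zero {x : (ZMod 2 × ZMod 2 → ℤ) × ℤ} (h : d₁ x = 0) :
    x = d₀ (x.1 (0, 0)) := by
  simp only [d₁, Prod.ext_iff, funext_iff, forall_zmod_two, zero_add, CharTwo.add_self_eq_zero,
    Prod.fst_zero, Prod.snd_zero, Pi.zero_apply] at h
  simp only [d₀, Prod.ext_iff, funext_iff, Prod.forall, forall_zmod_two, true_and]
  omega

theorem exact_d₀_d₁ : Function.Exact d₀ d₁ := fun x =>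
  ⟨fun h => ⟨_, (eq_d₀_of_d₁_eq_zero h).symm⟩, by rintro ⟨n, rfl⟩; exact d₁_d₀ n⟩

theorem d₂_eq_zero_iff (y : (ZMod 2 → ℤ) × (ZMod 2 → ℤ) × (ZMod 2 → ℤ)) :
    d₂ y = 0 ↔ y.1 0 + y.1 1 = y.2.1 0 + y.2.1 1 ∧ y.2.1 0 + y.2.1 1 = y.2.2 0 + y.2.2 1 := by
  rw [d₂, Submodule.Quotient.mk_eq_zero, Submodule.mem_span_singleton]
  constructor
  · rintro ⟨r, hr⟩
    simp only [Prod.ext_iff, Prod.smul_mk, smul_eq_mul, mul_one] at hr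
    omega
  · rintro ⟨h₁, h₂⟩
    exact ⟨y.1 0 + y.1 1, by simp [h₁, h₂]⟩

theorem d₂_d₁ (x : (ZMod 2 × ZMod 2 → ℤ) × ℤ) : d₂ (d₁ x) = 0 := by
  rw [d₂_eq_zero_iff]
  simp only [d₁, zero_add, CharTwo.add_self_eq_zero]
  constructor <;> ring

theorem exists_d₁_eq {y : (ZMod 2 → ℤ) × (ZMod 2 → ℤ) × (ZMod 2 → ℤ)}
    (hy : y.1 0 + y.1 1 = y.2.1 0 + y.2.1 1 ∧ y.2.1 0 + y.2.1 1 = y.2.2 0 + y.2.2 1) :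
    ∃ x, d₁ x = y := by
  obtain ⟨f, g, h⟩ := y
  dsimp only at hy
  -- Normalise `x.1 (0, 0) = 0`: the equations at `j = 0` then determine the other entries,
  -- and those at `j = 1` follow from the equality of the three sums.
  set m := g 0 + h 0 - f 1 with hm
  refine ⟨(fun p => if p.1 = 0 then (if p.2 = 0 then 0 else g 0 - m)
    else (if p.2 = 0 then f 0 - m else h 0 - m), m), ?_⟩
  simp only [d₁, Prod.ext_iff, funext_iff, forall_zmod_two, zero_add, CharTwo.add_self_eq_zero,
    ↓reduceIte, one_ne_zero, sub_add_cancel, true_and]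
  omega

theorem exact_d₁_d₂ : Function.Exact d₁ d₂ := fun y =>
  ⟨fun h => exists_d₁_eq ((d₂_eq_zero_iff y).1 h), by rintro ⟨x, rfl⟩; exact d₂_d₁ x⟩

theorem surjective_d₂ : Function.Surjective d₂ := by
  intro z
  obtain ⟨v, rfl⟩ := Submodule.Quotient.mk_surjective _ z
  exact ⟨(Pi.single 0 v.1, Pi.single 0 v.2.1, Pi.single 0 v.2.2), by simp [d₂]⟩

end KleinFourSequence

open KleinFourSequence in
/-- Exactness of the quadruple `0 → ℤ → ℤ[Θ]⊕ℤ → ⊕_θ ℤ[Θ/⟨θ⟩] → ℤ³/ℤ → 0`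
of permutation modules over the Klein four-group `Θ`. -/
theorem stmt_4
    (d₀ : ℤ → (ZMod 2 × ZMod 2 → ℤ) × ℤ)
    (hd₀ : ∀ n : ℤ, d₀ n = (fun _ => n, -2 * n))
    (d₁ : (ZMod 2 × ZMod 2 → ℤ) × ℤ →
      (ZMod 2 → ℤ) × (ZMod 2 → ℤ) × (ZMod 2 → ℤ))
    (hd₁ : ∀ x : (ZMod 2 × ZMod 2 → ℤ) × ℤ, d₁ x =
      (fun j => x.1 (0, j) + x.1 (1, j) + x.2,
       fun j => x.1 (j, 0) + x.1 (j, 1) + x.2,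
       fun j => x.1 (0, j) + x.1 (1, j + 1) + x.2))
    (d₂ : (ZMod 2 → ℤ) × (ZMod 2 → ℤ) × (ZMod 2 → ℤ) → stmt4Target)
    (hd₂ : ∀ y : (ZMod 2 → ℤ) × (ZMod 2 → ℤ) × (ZMod 2 → ℤ), d₂ y =
      Submodule.Quotient.mk
        (y.1 0 + y.1 1, y.2.1 0 + y.2.1 1, y.2.2 0 + y.2.2 1)) :
    Function.Injective d₀ ∧ Function.Exact d₀ d₁ ∧ Function.Exact d₁ d₂ ∧
      Function.Surjective d₂ := by
  obtain rfl : d₀ = KleinFourSequence.d₀ := funext hd₀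
  obtain rfl : d₁ = KleinFourSequence.d₁ := funext hd₁
  obtain rfl : d₂ = KleinFourSequence.d₂ := funext hd₂
  exact ⟨injective_d₀, exact_d₀_d₁, exact_d₁_d₂, surjective_d₂⟩
end

section
/- Let Θ be the Klein four-group with nontrivial elements a, b, c. The sequence of Z[Θ]-modules 0 → Z → Z[Θ/⟨a⟩] ⊕ Z[Θ/⟨b⟩] → Z[Θ] ⊕ Z → Z[Θ/⟨c⟩] → 0 is exact, where the first map sends 1 to the pair of norm elements, the middle map embeds each Z[Θ/⟨θ⟩] into Z[Θ] by x̄ ↦ Σ_{g ↦ x̄} g with appropriate sign and sends to the Z-coordinate via augmentation, and the last map is given by the projection Z[Θ] → Z[Θ/⟨c⟩] minus the norm element times the integer coordinate. -/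
/-! `ℤ[Θ]`, `Θ = ℤ/2 × ℤ/2`, is modelled as functions `Θ → ℤ`, and `ℤ[Θ/⟨θ⟩]` as functions
`ZMod 2 → ℤ` via the coordinate invariant under `θ`: the second one for `a = (1,0)`, the first
for `b = (0,1)`, their sum for `c = (1,1)`.

Exactness holds with coefficients in any abelian group. The ends are immediate. `d₁ x = 0`
forces both components of `x` to be one constant function. On the kernel of `d₂` a preimage is
`(j ↦ z(0,j), i ↦ z(0,0) - z(i,0))`: the two equations `z(0,j) + z(1,j+1) = n` supply the only
coordinate not matched by construction, `z(1,1) = z(0,1) + z(1,0) - z(0,0)`. -/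

theorem ZMod.two_eq_zero_or_eq_one (j : ZMod 2) : j = 0 ∨ j = 1 := by
  decide +revert

namespace KleinComplex

variable {A : Type*} [AddCommGroup A]

def d₀ (n : A) : (ZMod 2 → A) × (ZMod 2 → A) := (fun _ => n, fun _ => n)

def d₁ (x : (ZMod 2 → A) × (ZMod 2 → A)) : (ZMod 2 × ZMod 2 → A) × A :=
  (fun p => x.1 p.2 - x.2 p.1, (x.1 0 + x.1 1) - (x.2 0 + x.2 1))

def d₂ (z : (ZMod 2 × ZMod 2 → A) × A) : ZMod 2 → A :=
  fun j => z.1 (0, j) + z.1 (1, j + 1) - z.2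

omit [AddCommGroup A] in
theorem d₀_injective : Function.Injective (d₀ (A := A)) :=
  fun _ _ h => congrFun (congrArg Prod.fst h) 0

theorem exact_d₀_d₁ : Function.Exact (d₀ (A := A)) d₁ := by
  intro x
  constructor
  · intro h
    have hx (i j : ZMod 2) : x.1 j = x.2 i :=
      sub_eq_zero.mp (congrFun (congrArg Prod.fst h) (i, j))
    exact ⟨x.1 0, Prod.ext (funext fun j => (hx 0 0).trans (hx 0 j).symm) (funext fun i => hx i 0)⟩
  · rintro ⟨n, rfl⟩
    ext <;> simp [d₀, d₁]

theorem exact_d₁_d₂ : Function.Exact (d₁ (A := A)) d₂ := by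
  intro z
  constructor
  · intro h
    have h₀ : z.1 (0, 0) + z.1 (1, 1) = z.2 := sub_eq_zero.mp (congrFun h 0)
    have h₁ : z.1 (0, 1) + z.1 (1, 0) = z.2 := sub_eq_zero.mp (congrFun h 1)
    refine ⟨(fun j => z.1 (0, j), fun i => z.1 (0, 0) - z.1 (i, 0)), Prod.ext (funext ?_) ?_⟩
    · rintro ⟨i, j⟩
      rcases i.two_eq_zero_or_eq_one with rfl | rfl
      · simp [d₁]
      rcases j.two_eq_zero_or_eq_one with rfl | rfl
      · simp [d₁]
      show z.1 (0, 1) - (z.1 (0, 0) - z.1 (1, 0)) = z.1 (1, 1)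
      rw [eq_sub_of_add_eq' h₀, ← h₁]
      abel
    · simp [d₁, ← h₁]
  · rintro ⟨x, rfl⟩
    funext j
    rcases j.two_eq_zero_or_eq_one with rfl | rfl <;>
      simp [d₁, d₂, CharTwo.add_self_eq_zero] <;> abel

theorem d₂_surjective : Function.Surjective (d₂ (A := A)) := by
  intro w
  refine ⟨(fun p => if p.1 = 0 then w p.2 else 0, 0), ?_⟩
  ext j
  simp [d₂]

end KleinComplex

/-- Exactness of `0 → ℤ → ℤ[Θ/⟨a⟩] ⊕ ℤ[Θ/⟨b⟩] → ℤ[Θ] ⊕ ℤ → ℤ[Θ/⟨c⟩] → 0`: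
the first map sends `1` to the pair of norm elements, the middle map is
`(x̄,ȳ) ↦ (i_a(x̄) - i_b(ȳ), ε(x̄) - ε(ȳ))`, and the last map is
`(z,n) ↦ pr_c(z) - n·N_c`. -/
theorem stmt_5
    (d₀ : ℤ → (ZMod 2 → ℤ) × (ZMod 2 → ℤ))
    (hd₀ : ∀ n : ℤ, d₀ n = (fun _ => n, fun _ => n))
    (d₁ : (ZMod 2 → ℤ) × (ZMod 2 → ℤ) → (ZMod 2 × ZMod 2 → ℤ) × ℤ)
    (hd₁ : ∀ x : (ZMod 2 → ℤ) × (ZMod 2 → ℤ), d₁ x =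
      (fun p => x.1 p.2 - x.2 p.1, (x.1 0 + x.1 1) - (x.2 0 + x.2 1)))
    (d₂ : (ZMod 2 × ZMod 2 → ℤ) × ℤ → (ZMod 2 → ℤ))
    (hd₂ : ∀ z : (ZMod 2 × ZMod 2 → ℤ) × ℤ, d₂ z =
      fun j => z.1 (0, j) + z.1 (1, j + 1) - z.2) :
    Function.Injective d₀ ∧ Function.Exact d₀ d₁ ∧ Function.Exact d₁ d₂ ∧
      Function.Surjective d₂ := by
  obtain rfl : d₀ = KleinComplex.d₀ := funext hd₀
  obtain rfl : d₁ = KleinComplex.d₁ := funext hd₁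
  obtain rfl : d₂ = KleinComplex.d₂ := funext hd₂
  exact ⟨KleinComplex.d₀_injective, KleinComplex.exact_d₀_d₁, KleinComplex.exact_d₁_d₂,
    KleinComplex.d₂_surjective⟩
end

section
/- Let S₄ be the symmetric group on a four-element set X₄, let X₆ be the set of two-element subsets of X₄, and X₃ the quotient of X₆ by complementation. Then the sequence of Z[S₄]-modules 0 → Z → Z[X₄] ⊕ Z → Z[X₆] ⊕ Z → Z[X₃] → 0 is exact, where the first map sends 1 to (ΣX₄, -2); the middle map sends (x, n) to (U₁₁(x) + n·ΣX₆, ε(x) + 2n) with U₁₁ sending each element of X₄ to the sum of the three two-element subsets containing it and ε the augmentation; and the last map sends (y, n) to q(y) - n·ΣX₃ with q induced by the quotient X₆ → X₃. -/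
open Finset

/-- `X₆`: the two-element subsets of `X₄ = Fin 4`. -/
abbrev X6 : Type := {s : Finset (Fin 4) // s.card = 2}

/-- Complementation involution on `X₆`. -/
def complX6 (s : X6) : X6 :=
  ⟨s.1ᶜ, by simp [Finset.card_compl, s.2]⟩

/-- The equivalence relation on `X₆` identifying a subset with its complement. -/
instance X6setoid : Setoid X6 where
  r s t := t = s ∨ t = complX6 s
  iseqv := by
    constructor
    · exact fun s => Or.inl rfl
    · rintro s t (rfl | rfl)
      · exact Or.inl rfl
      · exact Or.inr (Subtype.ext (by simp [complX6]))
    · rintro s t u (rfl | rfl) (h | h)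
      · exact Or.inl h
      · exact Or.inr h
      · subst h; exact Or.inr rfl
      · subst h; exact Or.inl (Subtype.ext (by simp [complX6]))

instance : DecidableRel (X6setoid).r := fun s t =>
  inferInstanceAs (Decidable (t = s ∨ t = complX6 s))

/-- `X₃ = X₆ / ∗`, the quotient of `X₆` by complementation. -/
abbrev X3 : Type := Quotient X6setoid

instance : DecidableEq X3 := fun a b =>
  Quotient.decidableEq (d := fun s t =>
    inferInstanceAs (Decidable (t = s ∨ t = complX6 s))) a b

/-! The first and last maps are injective resp. surjective by inspection. A kernel element
`(x, n)` of the middle map has `x i + x j = -n` for all `i ≠ j`, which forces `x` to be constant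
since `X₄` has at least three points. A kernel element `(y, n)` of the last map satisfies
`y s + y sᶜ = n`, so it is determined by `n` and by `y` on the three pairs through `0`; these
four values are matched by an explicit element of `ℤ[X₄] ⊕ ℤ`, whose image also lies in the
kernel. -/

@[simp]
lemma mem_complX6 {s : X6} {i : Fin 4} : i ∈ (complX6 s).1 ↔ i ∉ s.1 :=
  Finset.mem_compl

@[simp]
lemma complX6_complX6 (s : X6) : complX6 (complX6 s) = s :=
  Subtype.ext (compl_compl s.1)

lemma complX6_ne : ∀ s : X6, complX6 s ≠ s := by
  decide

lemma X3_mk_eq_mk_iff {s t : X6} : (⟦s⟧ : X3) = ⟦t⟧ ↔ s = t ∨ s = complX6 t := by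
  rw [Quotient.eq]
  change t = s ∨ t = complX6 s ↔ _
  constructor <;> rintro (rfl | rfl) <;> simp

lemma X3_mk_complX6 (s : X6) : (⟦complX6 s⟧ : X3) = ⟦s⟧ :=
  X3_mk_eq_mk_iff.mpr (Or.inr rfl)

lemma sum_ite_mk_eq_mk {M : Type*} [AddCommMonoid M] (f : X6 → M) (t : X6) :
    (∑ s : X6, if (⟦s⟧ : X3) = ⟦t⟧ then f s else 0) = f t + f (complX6 t) := by
  rw [← Finset.sum_filter]
  have : ({s | (⟦s⟧ : X3) = ⟦t⟧} : Finset X6) = {t, complX6 t} := by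
    ext s; simp [X3_mk_eq_mk_iff]
  rw [this, Finset.sum_pair (complX6_ne t).symm]

lemma eq_of_forall_ne_add_eq {α M : Type*} [AddCancelCommMonoid M] (hα : 3 ≤ ENat.card α)
    {f : α → M} {c : M} (hf : ∀ i j, i ≠ j → f i + f j = c) (i j : α) : f i = f j := by
  obtain ⟨k, hki, hkj⟩ := ENat.exists_ne_ne_of_three_le hα i j
  exact add_right_cancel ((hf i k hki.symm).trans (hf j k hkj.symm).symm)

def diagonalMap (n : ℤ) : (Fin 4 → ℤ) × ℤ :=
  (fun _ => n, -2 * n)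

def incidenceMap (x : (Fin 4 → ℤ) × ℤ) : (X6 → ℤ) × ℤ :=
  (fun s => (∑ i ∈ s.1, x.1 i) + x.2, (∑ i, x.1 i) + 2 * x.2)

def quotientMap (y : (X6 → ℤ) × ℤ) : X3 → ℤ :=
  fun t => (∑ s : X6, if (⟦s⟧ : X3) = t then y.1 s else 0) - y.2

lemma diagonalMap_injective : Function.Injective diagonalMap := fun m n h => by
  have := congrArg Prod.snd h
  simp only [diagonalMap] at this
  omega

lemma incidenceMap_fst_pair (x : (Fin 4 → ℤ) × ℤ) {i j : Fin 4} (hij : i ≠ j) :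
    (incidenceMap x).1 ⟨{i, j}, card_pair hij⟩ = x.1 i + x.1 j + x.2 := by
  simp [incidenceMap, sum_pair hij]

lemma exact_diagonalMap_incidenceMap : Function.Exact diagonalMap incidenceMap := by
  intro x
  constructor
  · intro hx
    have hpair (i j : Fin 4) (hij : i ≠ j) : x.1 i + x.1 j = -x.2 := by
      have := congrArg (·.1 ⟨{i, j}, card_pair hij⟩) hx
      simp only [incidenceMap_fst_pair x hij, Prod.fst_zero, Pi.zero_apply] at this
      omega
    have hconst := eq_of_forall_ne_add_eq (by norm_num) hpair
    refine ⟨x.1 0, Prod.ext (funext fun i => hconst 0 i) ?_⟩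
    have := hpair 0 1 (by decide)
    simp only [diagonalMap, hconst 1 0] at this ⊢
    omega
  · rintro ⟨n, rfl⟩
    ext s
    · simp [incidenceMap, diagonalMap, s.2]
    · simp only [incidenceMap, diagonalMap, sum_const, card_univ, Fintype.card_fin,
        nsmul_eq_mul, Prod.snd_zero]
      ring

lemma quotientMap_mk (y : (X6 → ℤ) × ℤ) (s : X6) :
    quotientMap y ⟦s⟧ = y.1 s + y.1 (complX6 s) - y.2 := by
  simp only [quotientMap, sum_ite_mk_eq_mk]

lemma quotientMap_eq_zero_iff {y : (X6 → ℤ) × ℤ} :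
    quotientMap y = 0 ↔ ∀ s, y.1 s + y.1 (complX6 s) = y.2 := by
  simp only [funext_iff, Quotient.forall, Pi.zero_apply, quotientMap_mk, sub_eq_zero]

lemma quotientMap_incidenceMap (x : (Fin 4 → ℤ) × ℤ) :
    quotientMap (incidenceMap x) = 0 := by
  refine quotientMap_eq_zero_iff.mpr fun s => ?_
  have := sum_add_sum_compl s.1 x.1
  simp only [incidenceMap, complX6]
  linarith

-- every pair or its complement contains `0`
lemma eq_of_quotientMap_eq_zero {y z : (X6 → ℤ) × ℤ} (hy : quotientMap y = 0)
    (hz : quotientMap z = 0) (h0 : ∀ s : X6, 0 ∈ s.1 → y.1 s = z.1 s) (h2 : y.2 = z.2) :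
    y = z := by
  rw [quotientMap_eq_zero_iff] at hy hz
  refine Prod.ext (funext fun s => ?_) h2
  by_cases hs : 0 ∈ s.1
  · exact h0 s hs
  · have := h0 (complX6 s) (mem_complX6.mpr hs)
    linarith [hy s, hz s]

def p01 : X6 := ⟨{0, 1}, rfl⟩
def p02 : X6 := ⟨{0, 2}, rfl⟩
def p03 : X6 := ⟨{0, 3}, rfl⟩

lemma eq_p01_or_eq_p02_or_eq_p03_of_zero_mem :
    ∀ s : X6, 0 ∈ s.1 → s = p01 ∨ s = p02 ∨ s = p03 := by
  decide

lemma exists_incidenceMap_of_quotientMap_eq_zero {y : (X6 → ℤ) × ℤ}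
    (hy : quotientMap y = 0) : ∃ x, incidenceMap x = y := by
  -- the solution with `x 0 = 0`; the sum condition forces this value of `m`
  set m := y.1 p01 + y.1 p02 + y.1 p03 - y.2
  refine ⟨(![0, y.1 p01 - m, y.1 p02 - m, y.1 p03 - m], m),
    eq_of_quotientMap_eq_zero (quotientMap_incidenceMap _) hy (fun s hs => ?_) ?_⟩
  · rcases eq_p01_or_eq_p02_or_eq_p03_of_zero_mem s hs with rfl | rfl | rfl <;>
      simp [p01, p02, p03, incidenceMap_fst_pair]
  · simp only [incidenceMap, Fin.sum_univ_four, Matrix.cons_val_zero, Matrix.cons_val_one,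
      Matrix.cons_val, zero_add, m]
    ring

lemma exact_incidenceMap_quotientMap : Function.Exact incidenceMap quotientMap :=
  fun _ => ⟨exists_incidenceMap_of_quotientMap_eq_zero,
    fun ⟨x, hx⟩ => hx ▸ quotientMap_incidenceMap x⟩

lemma quotientMap_surjective : Function.Surjective quotientMap := by
  intro z
  -- exactly one of `s` and its complement contains `0`
  refine ⟨(fun s => if 0 ∈ s.1 then z ⟦s⟧ else 0, 0), funext (Quotient.ind fun s => ?_)⟩
  by_cases hs : 0 ∈ s.1 <;> simp [quotientMap_mk, hs, X3_mk_complX6]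

/-- Exactness of the quadruple `0 → ℤ → ℤ[X₄]⊕ℤ → ℤ[X₆]⊕ℤ → ℤ[X₃] → 0` of
permutation `ℤ[S₄]`-modules: first map `1 ↦ (ΣX₄, -2)`; middle map
`(x,n) ↦ (U₁₁(x) + n·ΣX₆, ε(x) + 2n)` where `U₁₁` sends a point to the sum of
the three `2`-subsets containing it; last map `(y,n) ↦ q(y) - n·ΣX₃`. -/
theorem stmt_6
    (d₀ : ℤ → (Fin 4 → ℤ) × ℤ)
    (hd₀ : ∀ n : ℤ, d₀ n = (fun _ => n, -2 * n))
    (d₁ : (Fin 4 → ℤ) × ℤ → (X6 → ℤ) × ℤ)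
    (hd₁ : ∀ x : (Fin 4 → ℤ) × ℤ, d₁ x =
      (fun s => (∑ i ∈ s.1, x.1 i) + x.2, (∑ i, x.1 i) + 2 * x.2))
    (d₂ : (X6 → ℤ) × ℤ → (X3 → ℤ))
    (hd₂ : ∀ y : (X6 → ℤ) × ℤ, d₂ y =
      fun t => (∑ s : X6, if (⟦s⟧ : X3) = t then y.1 s else 0) - y.2) :
    Function.Injective d₀ ∧ Function.Exact d₀ d₁ ∧ Function.Exact d₁ d₂ ∧
      Function.Surjective d₂ := by
  obtain rfl : d₀ = diagonalMap := funext hd₀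
  obtain rfl : d₁ = incidenceMap := funext hd₁
  obtain rfl : d₂ = quotientMap := funext hd₂
  exact ⟨diagonalMap_injective, exact_diagonalMap_incidenceMap,
    exact_incidenceMap_quotientMap, quotientMap_surjective⟩
end

section
/- For the 4-term exact sequence of Z[S₄]-modules 0 → Z → Z[X₄] ⊕ Z → Z[X₆] ⊕ Z → Z[X₃] → 0 of the previous statement, there exists a degree -1 map h of the underlying complex (i.e., maps h₀: Z[X₄]⊕Z → Z, h₁: Z[X₆]⊕Z → Z[X₄]⊕Z, h₂: Z[X₃] → Z[X₆]⊕Z) satisfying dh + hd = 2·id in every degree. -/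
open Finset

/-!
The homotopy is explicit, and each identity `dh + hd = 2` reduces to incidence counts between
the points and the 2-subsets of a 4-element set: every point lies in three 2-subsets, two
distinct points in exactly one, and two 2-subsets meet in two, zero or one points according as
they are equal, complementary or neither.
-/

theorem Finset.sum_sum_eq_sum_card_smul {ι κ M : Type*} [Fintype κ] [DecidableEq κ]
    [AddCommMonoid M] (T : Finset ι) (S : ι → Finset κ) (x : κ → M) :
    ∑ u ∈ T, ∑ j ∈ S u, x j = ∑ j, #{u ∈ T | j ∈ S u} • x j := by
  rw [sum_comm' (t' := univ) (s' := fun j => {u ∈ T | j ∈ S u}) (by simp)]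
  simp only [sum_const]

namespace X6

theorem card_filter_mem (i : Fin 4) : #{s : X6 | i ∈ s.1} = 3 := by
  revert i; decide

theorem card_filter_mem_and_mem (i j : Fin 4) :
    #{s : X6 | i ∈ s.1 ∧ j ∈ s.1} = if i = j then 3 else 1 := by
  revert i j; decide

theorem card_inter (s u : X6) :
    (#(s.1 ∩ u.1) : ℤ) = 1 + (if u = s then 1 else 0) - (if u = complX6 s then 1 else 0) := by
  revert s u; decide

theorem ne_complX6 (s : X6) : s ≠ complX6 s := by
  revert s; decide

theorem mk_complX6 (s : X6) : (⟦complX6 s⟧ : X3) = ⟦s⟧ :=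
  (Quotient.sound (Or.inr rfl)).symm

theorem filter_mk_eq_mk (s : X6) :
    ({u | (⟦u⟧ : X3) = ⟦s⟧} : Finset X6) = {s, complX6 s} := by
  revert s; decide

theorem sum_filter_mk_eq_mk (s : X6) (y : X6 → ℤ) :
    ∑ u with (⟦u⟧ : X3) = ⟦s⟧, y u = y s + y (complX6 s) := by
  rw [filter_mk_eq_mk, sum_pair (ne_complX6 s)]

theorem sum_filter_mem_sum_mem (i : Fin 4) (x : Fin 4 → ℤ) :
    ∑ s : X6 with i ∈ s.1, ∑ j ∈ s.1, x j = 2 * x i + ∑ j, x j := by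
  have hcard (j : Fin 4) : #{s : X6 | i ∈ s.1 ∧ j ∈ s.1} = 1 + if i = j then 2 else 0 := by
    rw [card_filter_mem_and_mem]; split_ifs <;> rfl
  rw [sum_sum_eq_sum_card_smul]
  simp only [filter_filter, hcard, add_smul, one_smul, ite_smul, zero_smul, sum_add_distrib,
    sum_ite_eq, mem_univ, if_true]
  ring

theorem sum_mem_sum_filter_mem (s : X6) (y : X6 → ℤ) :
    ∑ i ∈ s.1, ∑ u : X6 with i ∈ u.1, y u = ∑ u, y u + y s - y (complX6 s) := by
  rw [sum_sum_eq_sum_card_smul]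
  simp only [mem_filter, mem_univ, true_and, filter_mem_eq_inter, nsmul_eq_mul, card_inter,
    add_mul, sub_mul, one_mul, ite_mul, zero_mul, sum_add_distrib, sum_sub_distrib, sum_ite_eq',
    if_true]

theorem sum_sum_filter_mem (y : X6 → ℤ) :
    ∑ i : Fin 4, ∑ u : X6 with i ∈ u.1, y u = 2 * ∑ u, y u := by
  rw [sum_sum_eq_sum_card_smul]
  simp only [mem_filter, mem_univ, true_and, filter_mem_eq_inter, univ_inter, nsmul_eq_mul,
    mul_sum]
  exact sum_congr rfl fun u _ => by rw [u.2, Nat.cast_ofNat]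

end X6

theorem X3.card : Fintype.card X3 = 3 := by
  decide

namespace PermQuadruple

def d₀ (n : ℤ) : (Fin 4 → ℤ) × ℤ := (fun _ => n, -2 * n)

def d₁ (x : (Fin 4 → ℤ) × ℤ) : (X6 → ℤ) × ℤ :=
  (fun s => (∑ i ∈ s.1, x.1 i) + x.2, (∑ i, x.1 i) + 2 * x.2)

def d₂ (y : (X6 → ℤ) × ℤ) : X3 → ℤ :=
  fun t => (∑ s : X6, if (⟦s⟧ : X3) = t then y.1 s else 0) - y.2

def h₀ : (Fin 4 → ℤ) × ℤ →+ ℤ :=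
  AddMonoidHom.mk' (fun x => ∑ i, x.1 i + x.2) fun a b => by
    simp only [Prod.fst_add, Prod.snd_add, Pi.add_apply, sum_add_distrib]; ring

def h₁ : (X6 → ℤ) × ℤ →+ (Fin 4 → ℤ) × ℤ :=
  AddMonoidHom.mk' (fun y => (fun i => ∑ s : X6 with i ∈ s.1, y.1 s - 2 * y.2, 2 * y.2))
    fun a b => by
      ext <;> simp only [Prod.fst_add, Prod.snd_add, Pi.add_apply, sum_add_distrib] <;> ring

def h₂ : (X3 → ℤ) →+ (X6 → ℤ) × ℤ :=
  AddMonoidHom.mk' (fun w => (fun s => w ⟦s⟧ - ∑ t, w t, -2 * ∑ t, w t)) fun a b => by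
    ext <;> simp only [Prod.fst_add, Prod.snd_add, Pi.add_apply, sum_add_distrib] <;> ring

theorem h₀_d₀ (n : ℤ) : h₀ (d₀ n) = 2 * n := by
  simp only [h₀, d₀, AddMonoidHom.mk'_apply, sum_const, card_univ, Fintype.card_fin,
    nsmul_eq_mul]
  push_cast
  ring

theorem d₀_h₀_add_h₁_d₁ (x : (Fin 4 → ℤ) × ℤ) : d₀ (h₀ x) + h₁ (d₁ x) = (2 : ℤ) • x := by
  obtain ⟨x, m⟩ := x
  ext i
  · simp only [h₀, h₁, d₀, d₁, AddMonoidHom.mk'_apply, Prod.fst_add, Pi.add_apply,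
      sum_add_distrib, sum_const, X6.sum_filter_mem_sum_mem, Prod.smul_fst, Pi.smul_apply,
      smul_eq_mul, nsmul_eq_mul, X6.card_filter_mem]
    push_cast
    ring
  · simp only [h₀, h₁, d₀, d₁, AddMonoidHom.mk'_apply, Prod.snd_add, Prod.smul_snd,
      smul_eq_mul]
    ring

theorem d₁_h₁_add_h₂_d₂ (y : (X6 → ℤ) × ℤ) : d₁ (h₁ y) + h₂ (d₂ y) = (2 : ℤ) • y := by
  obtain ⟨y, k⟩ := y
  ext s
  · simp only [h₁, h₂, d₁, d₂, AddMonoidHom.mk'_apply, Prod.fst_add, Pi.add_apply,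
      sum_sub_distrib, sum_const, ← sum_filter, X6.sum_filter_mk_eq_mk,
      X6.sum_mem_sum_filter_mem, sum_fiberwise, s.2, card_univ, X3.card, Prod.smul_fst,
      Pi.smul_apply, smul_eq_mul, nsmul_eq_mul]
    push_cast
    ring
  · simp only [h₁, h₂, d₁, d₂, AddMonoidHom.mk'_apply, Prod.snd_add, sum_sub_distrib,
      sum_const, ← sum_filter, sum_fiberwise, X6.sum_sum_filter_mem, card_univ, X3.card,
      Fintype.card_fin, Prod.smul_snd, smul_eq_mul, nsmul_eq_mul]
    push_cast
    ring

theorem d₂_h₂ (w : X3 → ℤ) : d₂ (h₂ w) = (2 : ℤ) • w := by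
  ext t
  induction t using Quotient.inductionOn with
  | h s =>
    simp only [h₂, d₂, AddMonoidHom.mk'_apply, ← sum_filter]
    rw [X6.sum_filter_mk_eq_mk, X6.mk_complX6, Pi.smul_apply, smul_eq_mul]
    ring

end PermQuadruple

/-- For the exact quadruple `0 → ℤ → ℤ[X₄]⊕ℤ → ℤ[X₆]⊕ℤ → ℤ[X₃] → 0` of
permutation `ℤ[S₄]`-modules there is a degree `-1` homotopy `h` (additive maps
`h₀, h₁, h₂`) with `dh + hd = 2·id` in every degree. -/
theorem stmt_7
    (d₀ : ℤ → (Fin 4 → ℤ) × ℤ)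
    (hd₀ : ∀ n : ℤ, d₀ n = (fun _ => n, -2 * n))
    (d₁ : (Fin 4 → ℤ) × ℤ → (X6 → ℤ) × ℤ)
    (hd₁ : ∀ x : (Fin 4 → ℤ) × ℤ, d₁ x =
      (fun s => (∑ i ∈ s.1, x.1 i) + x.2, (∑ i, x.1 i) + 2 * x.2))
    (d₂ : (X6 → ℤ) × ℤ → (X3 → ℤ))
    (hd₂ : ∀ y : (X6 → ℤ) × ℤ, d₂ y =
      fun t => (∑ s : X6, if (⟦s⟧ : X3) = t then y.1 s else 0) - y.2) :
    ∃ (h₀ : (Fin 4 → ℤ) × ℤ →+ ℤ)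
      (h₁ : (X6 → ℤ) × ℤ →+ (Fin 4 → ℤ) × ℤ)
      (h₂ : (X3 → ℤ) →+ (X6 → ℤ) × ℤ),
      (∀ n : ℤ, h₀ (d₀ n) = 2 * n) ∧
      (∀ x : (Fin 4 → ℤ) × ℤ, d₀ (h₀ x) + h₁ (d₁ x) = (2 : ℤ) • x) ∧
      (∀ y : (X6 → ℤ) × ℤ, d₁ (h₁ y) + h₂ (d₂ y) = (2 : ℤ) • y) ∧
      (∀ w : X3 → ℤ, d₂ (h₂ w) = (2 : ℤ) • w) := by
  obtain rfl : d₀ = PermQuadruple.d₀ := funext hd₀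
  obtain rfl : d₁ = PermQuadruple.d₁ := funext hd₁
  obtain rfl : d₂ = PermQuadruple.d₂ := funext hd₂
  exact ⟨PermQuadruple.h₀, PermQuadruple.h₁, PermQuadruple.h₂, PermQuadruple.h₀_d₀,
    PermQuadruple.d₀_h₀_add_h₁_d₁, PermQuadruple.d₁_h₁_add_h₂_d₂, PermQuadruple.d₂_h₂⟩
end

section
/- Let Σ be a cyclic group of order k with generator σ, where m divides k, and let Π ⊆ Σ be the subgroup of order m with quotient Σ/Π generated by the image σ̄ of σ. Then the sequence of Z[Σ]-modules 0 → Z → Z[Σ] ⊕ Z → Z[Σ] ⊕ Z[Σ/Π] → Z[Σ/Π] → 0 is exact, where the first map is 1 ↦ (N_Σ, -m) with N_Σ = 1 + σ + ... + σ^{k-1}; the middle map sends (x, n) to ((1-σ)x, pr_Π(x) + n·(1 + σ̄ + ... + σ̄^{k/m-1})); and the last map sends (y, z̄) to pr_Π(y) + (-1 + σ̄)·z̄, with pr_Π: Z[Σ] → Z[Σ/Π] the natural projection. -/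
/-! For a finite cyclic group `G = ⟨g⟩`, multiplication by `1 - g` on `ℤ[G]` has kernel `ℤ · N_G`
and image the augmentation ideal. Exactness at `ℤ[Σ] ⊕ ℤ` then follows from
`pr(N_Σ) = m · N_{Σ/Π}`, the fibres of `Σ → Σ/Π` having `m` elements. At `ℤ[Σ] ⊕ ℤ[Σ/Π]`, a cycle
`(y, z)` has `y` of augmentation zero, so `y = (1 - σ) x`, and then `pr x - z` is fixed by `σ̄`,
hence a multiple of `N_{Σ/Π}`. -/

open Finset

lemma MonoidHom.mem_zpowers_apply_of_surjective {G H : Type*} [Group G] [Group H] {f : G →* H}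
    (hf : Function.Surjective f) {g : G} (hg : ∀ x, x ∈ Subgroup.zpowers g) (y : H) :
    y ∈ Subgroup.zpowers (f g) := by
  obtain ⟨x, rfl⟩ := hf y
  obtain ⟨n, rfl⟩ := hg x
  exact ⟨n, (map_zpow f g n).symm⟩

namespace MonoidAlgebra

lemma mapDomain_surjective {R M N : Type*} [Semiring R] {f : M → N}
    (hf : Function.Surjective f) : Function.Surjective (mapDomain (R := R) f) := fun y => by
  obtain ⟨v, hv⟩ := Finsupp.mapDomain_surjective hf y.coeff
  exact ⟨ofCoeff v, by ext; simp [mapDomain, hv]⟩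

variable (R G : Type*) [CommRing R] [Group G]

noncomputable def normElement [Fintype G] : R[G] := ∑ x : G, of R G x

variable {R G}

lemma leftRegular_apply_eq_of_mul (g : G) (x : R[G]) :
    Representation.leftRegular R G g x = of R G g * x := by
  rw [← Representation.asAlgebraHom_of, Representation.asAlgebraHom_ofMulAction_smul_eq_mul]

section Finite

variable [Fintype G]

@[simp]
lemma coeff_normElement (x : G) : (normElement R G).coeff x = 1 := by
  simp [normElement, coeff_sum, coeff_single]

lemma of_mul_normElement (g : G) : of R G g * normElement R G = normElement R G := by
  simp only [normElement, mul_sum, ← map_mul]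
  exact Fintype.sum_equiv (Equiv.mulLeft g) _ _ fun _ => rfl

lemma eq_coeff_one_smul_normElement {g : G} (hg : ∀ x, x ∈ Subgroup.zpowers g)
    {x : R[G]} (hx : of R G g * x = x) : x = x.coeff 1 • normElement R G := by
  ext γ
  rw [← leftRegular_apply_eq_of_mul] at hx
  simp [Representation.coeff_of_leftRegular_of_generator g hg x hx]

lemma exists_one_sub_mul_eq_of_counit_eq_zero {g : G} (hg : ∀ x, x ∈ Subgroup.zpowers g)
    {x : R[G]} (hx : Coalgebra.counit (R := R) x = 0) : ∃ y, (1 - of R G g) * y = x := by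
  have hcounit : (Finsupp.linearCombination R fun _ => (1 : R)) ∘ₗ
      (coeffLinearEquiv (M := G) R).toLinearMap = Coalgebra.counit := by
    ext; simp
  have hker : x ∈ Representation.Coinvariants.ker (Representation.leftRegular R G) := by
    rwa [Representation.FiniteCyclicGroup.coinvariantsKer_leftRegular_eq_ker, LinearMap.mem_ker,
      hcounit]
  rw [Representation.FiniteCyclicGroup.coinvariantsKer_eq_range _ g hg] at hker
  obtain ⟨y, rfl⟩ := hker
  refine ⟨-y, ?_⟩
  simp [leftRegular_apply_eq_of_mul, sub_mul]

variable {H : Type*} [Group H] [Fintype H]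

lemma mapDomain_normElement {f : G →* H} (hf : Function.Surjective f) :
    mapDomain f (normElement R G) = Nat.card f.ker • normElement R H := by
  classical
  have hfiber (h : H) : #{x | f x = h} = Nat.card f.ker := by
    rw [← Nat.card_congr (f.fiberEquivKerOfSurjective hf h), Nat.card_eq_fintype_card,
      Fintype.card_subtype]
    rfl
  change mapDomainRingHom R f _ = _
  simp only [normElement, map_sum, smul_sum]
  rw [← sum_fiberwise univ f]
  refine sum_congr rfl fun h _ => ?_
  rw [← hfiber, ← sum_const]
  refine sum_congr rfl fun x hx => ?_
  rw [(mem_filter.1 hx).2.symm]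
  exact mapDomain_single

end Finite

section CyclicQuotient

variable {G H : Type*} [Group G] [Group H] [Fintype G] [Fintype H] {f : G →* H}
  (hf : Function.Surjective f) {g : G} (hg : ∀ x, x ∈ Subgroup.zpowers g)
include hf hg

theorem exact_smul_normElement_one_sub_mul :
    Function.Exact (fun n : ℤ => (n • normElement ℤ G, -(Nat.card f.ker * n : ℤ)))
      (fun x : ℤ[G] × ℤ =>
        ((1 - of ℤ G g) * x.1, mapDomainBialgHom ℤ f x.1 + x.2 • normElement ℤ H)) := by
  have hπN :
      mapDomainBialgHom ℤ f (normElement ℤ G) = (Nat.card f.ker : ℤ) • normElement ℤ H := by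
    rw [natCast_zsmul]
    exact mapDomain_normElement hf
  intro y
  constructor
  · obtain ⟨x, n⟩ := y
    intro h
    simp only [Prod.mk_eq_zero] at h
    obtain ⟨h1, h2⟩ := h
    have hx : x = x.coeff 1 • normElement ℤ G :=
      eq_coeff_one_smul_normElement hg (by rwa [sub_mul, one_mul, sub_eq_zero, eq_comm] at h1)
    rw [hx, map_zsmul, hπN, smul_smul, ← add_smul] at h2
    have hn := congrArg (coeff · 1) h2
    simp only [coeff_smul, Finsupp.smul_apply, coeff_normElement, smul_eq_mul, mul_one,
      coeff_zero, Finsupp.coe_zero, Pi.zero_apply] at hn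
    exact ⟨x.coeff 1, Prod.ext hx.symm (by dsimp only; linarith)⟩
  · rintro ⟨c, rfl⟩
    refine Prod.mk_eq_zero.2 ⟨?_, ?_⟩
    · rw [mul_smul_comm, sub_mul, one_mul, of_mul_normElement, sub_self, smul_zero]
    · rw [map_zsmul, hπN, smul_smul, ← add_smul, mul_comm, add_neg_cancel, zero_smul]

theorem exact_one_sub_mul_mapDomain_add :
    Function.Exact
      (fun x : ℤ[G] × ℤ =>
        ((1 - of ℤ G g) * x.1, mapDomainBialgHom ℤ f x.1 + x.2 • normElement ℤ H))
      (fun y : ℤ[G] × ℤ[H] => mapDomainBialgHom ℤ f y.1 + (-1 + of ℤ H (f g)) * y.2) := by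
  have hπ (x : ℤ[G]) : mapDomainBialgHom ℤ f ((1 - of ℤ G g) * x) =
      (1 - of ℤ H (f g)) * mapDomainBialgHom ℤ f x := by
    rw [map_mul, map_sub, map_one, of_apply, of_apply, mapDomainBialgHom_single]
  intro w
  constructor
  · obtain ⟨y, z⟩ := w
    intro h
    dsimp only at h
    have hy : Coalgebra.counit (R := ℤ) y = 0 := by
      simpa [CoalgHomClass.counit_comp_apply] using congrArg (Bialgebra.counitAlgHom ℤ ℤ[H]) h
    obtain ⟨x, rfl⟩ := exists_one_sub_mul_eq_of_counit_eq_zero hg hy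
    set u := mapDomainBialgHom ℤ f x - z with hu_def
    have hu : of ℤ H (f g) * u = u := by
      rw [← sub_eq_zero, ← neg_eq_zero, ← h, hπ, hu_def]
      noncomm_ring
    refine ⟨(x, -u.coeff 1), Prod.ext rfl ?_⟩
    dsimp only
    rw [neg_smul, ← eq_coeff_one_smul_normElement (f.mem_zpowers_apply_of_surjective hf hg) hu,
      ← sub_eq_add_neg, sub_sub_cancel]
  · rintro ⟨⟨x, n⟩, rfl⟩
    have hN : (-1 + of ℤ H (f g)) * normElement ℤ H = 0 := by
      rw [add_mul, of_mul_normElement, neg_one_mul, neg_add_cancel]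
    dsimp only
    rw [hπ, mul_add, mul_smul_comm, hN, smul_zero, add_zero, ← add_mul, sub_add_add_cancel,
      add_neg_cancel, zero_mul]

end CyclicQuotient

end MonoidAlgebra

open MonoidAlgebra Multiplicative

lemma ZMod.mem_zpowers_ofAdd_one {n : ℕ} (x : Multiplicative (ZMod n)) :
    x ∈ Subgroup.zpowers (ofAdd 1) :=
  ⟨(toAdd x).cast, by simp [← ofAdd_zsmul]⟩

lemma ZMod.sum_range_natCast {M : Type*} [AddCommMonoid M] (n : ℕ) [NeZero n]
    (φ : ZMod n → M) : ∑ i ∈ range n, φ i = ∑ x, φ x :=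
  sum_nbij' (↑) ZMod.val (by simp) (fun x _ => mem_range.2 x.val_lt)
    (fun i hi => ZMod.val_cast_of_lt (mem_range.1 hi)) (fun x _ => ZMod.natCast_zmod_val x)
    (fun _ _ => rfl)

lemma ZMod.sum_range_of_ofAdd_natCast (R : Type*) [CommRing R] (n : ℕ) [NeZero n] :
    ∑ i ∈ range n, of R _ (ofAdd (i : ZMod n)) = normElement R (Multiplicative (ZMod n)) :=
  (ZMod.sum_range_natCast n _).trans (Fintype.sum_equiv Multiplicative.ofAdd _ _ fun _ => rfl)

lemma ZMod.card_ker_castHom {n d : ℕ} [NeZero n] (h : d ∣ n) :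
    Nat.card (castHom h (ZMod d)).toAddMonoidHom.toMultiplicative.ker = n / d := by
  have hd : NeZero d := ⟨by rintro rfl; exact NeZero.ne n (zero_dvd_iff.1 h)⟩
  have := Subgroup.card_mul_index (castHom h (ZMod d)).toAddMonoidHom.toMultiplicative.ker
  rw [Subgroup.index_ker, MonoidHom.range_eq_top_of_surjective _ (castHom_surjective h),
    Subgroup.card_top] at this
  rw [Nat.card_eq_fintype_card (α := Multiplicative (ZMod d)),
    Nat.card_eq_fintype_card (α := Multiplicative (ZMod n)), Fintype.card_multiplicative,
    Fintype.card_multiplicative, ZMod.card, ZMod.card] at this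
  exact Nat.eq_div_of_mul_eq_left (NeZero.ne d) this

/-- `Σ` is `Multiplicative (ZMod k)` with `σ = ofAdd 1`, and `Σ/Π` is
`Multiplicative (ZMod (k / m))`, `Π` being the kernel of the reduction `ZMod k → ZMod (k / m)`. -/
theorem stmt_10_general (k m : ℕ) (hmk : m ∣ k) (hk : 0 < k)
    (pr : MonoidAlgebra ℤ (Multiplicative (ZMod k)) →
      MonoidAlgebra ℤ (Multiplicative (ZMod (k / m))))
    (hpr : pr = MonoidAlgebra.mapDomain (fun x => Multiplicative.ofAdd
      (ZMod.castHom (Nat.div_dvd_of_dvd hmk) (ZMod (k / m)) (Multiplicative.toAdd x))))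
    (Nbig : MonoidAlgebra ℤ (Multiplicative (ZMod k)))
    (hNbig : Nbig = ∑ i ∈ range k, MonoidAlgebra.of ℤ _ (Multiplicative.ofAdd (i : ZMod k)))
    (N' : MonoidAlgebra ℤ (Multiplicative (ZMod (k / m))))
    (hN' : N' = ∑ i ∈ range (k / m),
      MonoidAlgebra.of ℤ _ (Multiplicative.ofAdd (i : ZMod (k / m))))
    (d₀ : ℤ → MonoidAlgebra ℤ (Multiplicative (ZMod k)) × ℤ)
    (hd₀ : ∀ n : ℤ, d₀ n = (n • Nbig, -(m * n)))
    (d₁ : MonoidAlgebra ℤ (Multiplicative (ZMod k)) × ℤ →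
      MonoidAlgebra ℤ (Multiplicative (ZMod k)) ×
        MonoidAlgebra ℤ (Multiplicative (ZMod (k / m))))
    (hd₁ : ∀ x, d₁ x =
      ((1 - MonoidAlgebra.of ℤ _ (Multiplicative.ofAdd (1 : ZMod k))) * x.1,
        pr x.1 + x.2 • N'))
    (d₂ : MonoidAlgebra ℤ (Multiplicative (ZMod k)) ×
        MonoidAlgebra ℤ (Multiplicative (ZMod (k / m))) →
      MonoidAlgebra ℤ (Multiplicative (ZMod (k / m))))
    (hd₂ : ∀ y, d₂ y = pr y.1 +
      (-1 + MonoidAlgebra.of ℤ _ (Multiplicative.ofAdd (1 : ZMod (k / m)))) * y.2) :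
    Function.Injective d₀ ∧ Function.Exact d₀ d₁ ∧ Function.Exact d₁ d₂ ∧
      Function.Surjective d₂ := by
  have : NeZero k := ⟨hk.ne'⟩
  have hm : m ≠ 0 := by rintro rfl; exact hk.ne' (zero_dvd_iff.1 hmk)
  have : NeZero (k / m) := ⟨(Nat.div_pos (Nat.le_of_dvd hk hmk) (Nat.pos_of_ne_zero hm)).ne'⟩
  set F := (ZMod.castHom (Nat.div_dvd_of_dvd hmk) (ZMod (k / m))).toAddMonoidHom.toMultiplicative
  have hF : Function.Surjective F := ZMod.castHom_surjective (Nat.div_dvd_of_dvd hmk)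
  have hcard : Nat.card F.ker = m := by
    rw [ZMod.card_ker_castHom, Nat.div_div_self hmk hk.ne']
  have hσ : F (ofAdd 1) = ofAdd 1 :=
    congrArg ofAdd (map_one (ZMod.castHom (Nat.div_dvd_of_dvd hmk) _))
  have hpr' : pr = mapDomainBialgHom ℤ F := hpr
  rw [ZMod.sum_range_of_ofAdd_natCast] at hNbig hN'
  subst hpr' hNbig hN'
  obtain rfl : d₀ = _ := funext hd₀
  obtain rfl : d₁ = _ := funext hd₁
  obtain rfl : d₂ = _ := funext hd₂
  have hg := ZMod.mem_zpowers_ofAdd_one (n := k)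
  refine ⟨?_, ?_, ?_, ?_⟩
  · intro a b h
    simpa [hm] using congrArg Prod.snd h
  · simpa only [hcard] using exact_smul_normElement_one_sub_mul hF hg
  · simpa only [hσ] using exact_one_sub_mul_mapDomain_add hF hg
  · intro z
    obtain ⟨y, rfl⟩ := mapDomain_surjective hF z
    exact ⟨(y, 0), by simp only [mul_zero, add_zero]; rfl⟩

/-- We model the cyclic group `Σ` of order `k` with generator `σ` as
`Multiplicative (ZMod k)` with `σ = ofAdd 1`; the subgroup `Π` of order `m ∣ k` is the
kernel of the reduction `ZMod k → ZMod (k/m)`, so `Σ/Π = Multiplicative (ZMod (k/m))`.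
The quadruple `0 → ℤ → ℤ[Σ]⊕ℤ → ℤ[Σ]⊕ℤ[Σ/Π] → ℤ[Σ/Π] → 0` with maps
`1 ↦ (N_Σ, -m)`, `(x,n) ↦ ((1-σ)x, pr_Π(x) + n·(1+σ̄+...+σ̄^{k/m-1}))`,
`(y,z̄) ↦ pr_Π(y) + (-1+σ̄)z̄` is exact. -/
theorem stmt_10 (k m : ℕ) (hm : 2 ≤ m) (hmk : m ∣ k) (hk : 0 < k)
    (pr : MonoidAlgebra ℤ (Multiplicative (ZMod k)) →
      MonoidAlgebra ℤ (Multiplicative (ZMod (k / m))))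
    (hpr : pr = MonoidAlgebra.mapDomain (fun x => Multiplicative.ofAdd
      (ZMod.castHom (Nat.div_dvd_of_dvd hmk) (ZMod (k / m)) (Multiplicative.toAdd x))))
    (Nbig : MonoidAlgebra ℤ (Multiplicative (ZMod k)))
    (hNbig : Nbig = ∑ i ∈ range k, MonoidAlgebra.of ℤ _ (Multiplicative.ofAdd (i : ZMod k)))
    (N' : MonoidAlgebra ℤ (Multiplicative (ZMod (k / m))))
    (hN' : N' = ∑ i ∈ range (k / m),
      MonoidAlgebra.of ℤ _ (Multiplicative.ofAdd (i : ZMod (k / m))))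
    (d₀ : ℤ → MonoidAlgebra ℤ (Multiplicative (ZMod k)) × ℤ)
    (hd₀ : ∀ n : ℤ, d₀ n = (n • Nbig, -(m * n)))
    (d₁ : MonoidAlgebra ℤ (Multiplicative (ZMod k)) × ℤ →
      MonoidAlgebra ℤ (Multiplicative (ZMod k)) ×
        MonoidAlgebra ℤ (Multiplicative (ZMod (k / m))))
    (hd₁ : ∀ x, d₁ x =
      ((1 - MonoidAlgebra.of ℤ _ (Multiplicative.ofAdd (1 : ZMod k))) * x.1,
        pr x.1 + x.2 • N'))
    (d₂ : MonoidAlgebra ℤ (Multiplicative (ZMod k)) ×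
        MonoidAlgebra ℤ (Multiplicative (ZMod (k / m))) →
      MonoidAlgebra ℤ (Multiplicative (ZMod (k / m))))
    (hd₂ : ∀ y, d₂ y = pr y.1 +
      (-1 + MonoidAlgebra.of ℤ _ (Multiplicative.ofAdd (1 : ZMod (k / m)))) * y.2) :
    Function.Injective d₀ ∧ Function.Exact d₀ d₁ ∧ Function.Exact d₁ d₂ ∧
      Function.Surjective d₂ :=
  stmt_10_general k m hmk hk pr hpr Nbig hNbig N' hN' d₀ hd₀ d₁ hd₁ d₂ hd₂
end

section
/- Let Γ = D_k be the dihedral group of order 2k acting on the regular k-gon Δ, with k divisible by 4, Δ' its vertex set and Δ'' its edge set, and Π the order-2 subgroup of the rotation subgroup Σ. Then the quadruple of permutation Z[Γ]-modules 0 → Z → Z[Δ'] ⊕ Z → Z[Δ''] ⊕ Z[Δ'/Π] → Z[Δ''/Π] → 0 is exact, with maps: first, 1 ↦ (#Δ', -2); middle, (x, n) ↦ ((σ^{-1/2}+σ^{1/2})(x) + n·#Δ'', pr_Π(x) + n·#(Δ'/Π)); last, (y, z̄) ↦ pr_Π(y) - (σ̄^{-1/2}+σ̄^{1/2})(z̄);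 where σ^{±1/2}: Δ' → Δ'' is the map sending a vertex to one of its adjacent edges such that the composite Δ' → Δ'' → Δ' is the rotation σ^{±1}, and analogously modulo Π. -/
/-!
Write `m = k / 2`. The projection `pr_Π` commutes with the half-shift operator
`x ↦ (e ↦ x e + x (e + 1))` and is surjective, so exactness at `ℤ[Δ''] ⊕ ℤ[Δ'/Π]` reduces
to a `y` with `pr_Π y = 0`, i.e. `y (t + m) = -y t`. For such `y` solve
`X t + X (t + 1) + n = y t` recursively on `ℕ`, choosing `n` so that `X 0 + X m + n = 0`;
antiperiodicity of `y` propagates this to every `t`, which makes `X` `k`-periodic with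
`pr_Π X = -n`. At `ℤ[Δ'] ⊕ ℤ`, a kernel element `x` is `2`-periodic, so `x m = x 0` as `m` is
even; this forces `n = -2 x 0` and then `x` constant.
-/

open Function

namespace DihedralQuadruple

def halfShift (n : ℕ) : (ZMod n → ℤ) →+ (ZMod n → ℤ) :=
  AddMonoidHom.mk' (fun x e => x e + x (e + 1)) fun x y => by
    funext e; simp only [Pi.add_apply]; ring

def projHalf (k : ℕ) : (ZMod k → ℤ) →+ (ZMod (k / 2) → ℤ) :=
  AddMonoidHom.mk'
    (fun x j => x (j.val : ZMod k) + x ((j.val : ZMod k) + ((k / 2 : ℕ) : ZMod k)))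
    fun x y => by funext j; simp only [Pi.add_apply]; ring

theorem halfShift_apply (n : ℕ) (x : ZMod n → ℤ) (e : ZMod n) :
    halfShift n x e = x e + x (e + 1) := rfl

theorem halfShift_const (n : ℕ) (c : ℤ) : halfShift n (fun _ => c) = fun _ => 2 * c := by
  funext e; rw [halfShift_apply]; ring

theorem projHalf_const (k : ℕ) (c : ℤ) : projHalf k (fun _ => c) = fun _ => 2 * c := by
  funext j; change c + c = 2 * c; ring

def altPrimitive (y : ℕ → ℤ) : ℕ → ℤ
  | 0 => 0
  | t + 1 => y t - altPrimitive y t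

theorem altPrimitive_add_two (y : ℕ → ℤ) (t : ℕ) :
    altPrimitive y (t + 2) = altPrimitive y t + (y (t + 1) - y t) := by
  simp only [altPrimitive]; ring

theorem altPrimitive_sub_const_of_even (y : ℕ → ℤ) (n : ℤ) {t : ℕ} (ht : Even t) :
    altPrimitive (fun s => y s - n) t = altPrimitive y t := by
  obtain ⟨s, rfl⟩ := ht
  induction s with
  | zero => rfl
  | succ s ih =>
    rw [show s + 1 + (s + 1) = s + s + 2 by ring, altPrimitive_add_two, altPrimitive_add_two, ih]
    ring

theorem exists_add_succ_eq_of_antiperiodic {m : ℕ} (hm : Even m) {y : ℕ → ℤ}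
    (hy : Antiperiodic y m) :
    ∃ (X : ℕ → ℤ) (n : ℤ),
      (∀ t, X t + X (t + 1) + n = y t) ∧ ∀ t, X t + X (t + m) + n = 0 := by
  -- `X (2 s)` does not depend on `n`, so this `n` gives `X 0 + X m + n = 0`.
  set n := -altPrimitive y m
  refine ⟨altPrimitive (fun s => y s - n), n, fun t => by simp only [altPrimitive]; ring,
    fun t => ?_⟩
  induction t with
  | zero =>
    rw [zero_add, altPrimitive_sub_const_of_even y n hm, altPrimitive, zero_add, add_neg_cancel]
  | succ t ih =>
    rw [add_right_comm t 1 m]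
    simp only [altPrimitive]
    linarith [hy t]

section

variable {k : ℕ}

theorem natCast_half_add_self (hk : Even k) :
    ((k / 2 : ℕ) : ZMod k) + ((k / 2 : ℕ) : ZMod k) = 0 := by
  rw [← Nat.cast_add, show k / 2 + k / 2 = k by obtain ⟨r, rfl⟩ := hk; omega,
    ZMod.natCast_self]

theorem periodic_add_half (hk : Even k) (x : ZMod k → ℤ) :
    Periodic (fun a : ℕ => x a + x (a + ((k / 2 : ℕ) : ZMod k))) (k / 2) := by
  intro a
  simp only [Nat.cast_add, add_assoc, natCast_half_add_self hk, add_zero]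
  exact add_comm _ _

theorem projHalf_natCast (hk : Even k) (x : ZMod k → ℤ) (a : ℕ) :
    projHalf k x a = x a + x (a + ((k / 2 : ℕ) : ZMod k)) := by
  change x (a : ZMod (k / 2)).val + _ = _
  rw [ZMod.val_natCast]
  exact (periodic_add_half hk x).map_mod_nat a

end

section

variable {k : ℕ} [NeZero k]

theorem neZero_half (hk : Even k) : NeZero (k / 2) :=
  ⟨by have := NeZero.pos k; obtain ⟨r, rfl⟩ := hk; omega⟩

theorem projHalf_halfShift (hk : Even k) (x : ZMod k → ℤ) :
    projHalf k (halfShift k x) = halfShift (k / 2) (projHalf k x) := by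
  have := neZero_half hk
  funext j
  obtain ⟨a, rfl⟩ := ZMod.natCast_zmod_surjective j
  rw [halfShift_apply, ← Nat.cast_succ, projHalf_natCast hk, projHalf_natCast hk,
    projHalf_natCast hk, halfShift_apply, halfShift_apply, Nat.cast_succ,
    add_right_comm _ ((k / 2 : ℕ) : ZMod k) 1]
  ring

theorem projHalf_surjective (hk : Even k) : Surjective (projHalf k) := by
  have := neZero_half hk
  have hlt : k / 2 < k := Nat.div_lt_self (NeZero.pos k) one_lt_two
  intro z
  refine ⟨fun e => if e.val < k / 2 then z e.val else 0, funext fun j => ?_⟩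
  obtain ⟨a, ha, rfl⟩ : ∃ a < k / 2, (a : ZMod (k / 2)) = j :=
    ⟨j.val, j.val_lt, ZMod.natCast_zmod_val j⟩
  rw [projHalf_natCast hk, ← Nat.cast_add, ZMod.val_cast_of_lt (ha.trans hlt),
    ZMod.val_cast_of_lt (by obtain ⟨r, rfl⟩ := hk; omega)]
  simp [ha]

theorem eq_const_of_halfShift_add_eq_zero (h4 : 4 ∣ k) {x : ZMod k → ℤ} {n : ℤ}
    (h₁ : halfShift k x + (fun _ => n) = 0) (h₂ : projHalf k x + (fun _ => n) = 0) :
    x = (fun _ => x 0) ∧ n = -2 * x 0 := by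
  have hk : Even k := ⟨k / 2, by omega⟩
  have hstep (e : ZMod k) : x e + x (e + 1) + n = 0 := congrFun h₁ e
  have hper : Periodic x 2 := fun e => by
    have := hstep (e + 1)
    rw [add_assoc e, one_add_one_eq_two] at this
    linarith [hstep e]
  have hhalf : x ((k / 2 : ℕ) : ZMod k) = x 0 := by
    have := (hper.nat_mul (k / 4)).eq
    rwa [show ((k / 4 : ℕ) : ZMod k) * 2 = ((k / 2 : ℕ) : ZMod k) by
      rw [show k / 2 = k / 4 * 2 by omega]; push_cast; rfl] at this
  have hn : n = -2 * x 0 := by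
    have := congrFun h₂ ((0 : ℕ) : ZMod (k / 2))
    rw [Pi.add_apply, projHalf_natCast hk, Nat.cast_zero, zero_add, hhalf,
      Pi.zero_apply] at this
    linarith
  refine ⟨funext fun e => ?_, hn⟩
  obtain ⟨t, rfl⟩ := ZMod.natCast_zmod_surjective e
  induction t with
  | zero => rw [Nat.cast_zero]
  | succ t ih => have := hstep t; push_cast; linarith

theorem exists_halfShift_add_eq_of_projHalf_eq_zero (h4 : 4 ∣ k) {y : ZMod k → ℤ}
    (hy : projHalf k y = 0) :
    ∃ (x : ZMod k → ℤ) (n : ℤ),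
      halfShift k x + (fun _ => n) = y ∧ projHalf k x + (fun _ => n) = 0 := by
  have hk : Even k := ⟨k / 2, by omega⟩
  have := neZero_half hk
  have hanti : Antiperiodic (fun t : ℕ => y t) (k / 2) := fun t => by
    have := congrFun hy t
    rw [projHalf_natCast hk, Pi.zero_apply] at this
    push_cast
    linarith
  obtain ⟨X, n, hX₁, hX₂⟩ := exists_add_succ_eq_of_antiperiodic ⟨k / 4, by omega⟩ hanti
  have hXper : Periodic X k := fun t => by
    have := hX₂ (t + k / 2)
    rw [add_assoc t, show k / 2 + k / 2 = k by omega] at this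
    linarith [hX₂ t]
  have hX (t : ℕ) : X (t : ZMod k).val = X t := by
    rw [ZMod.val_natCast]; exact hXper.map_mod_nat t
  refine ⟨fun e => X e.val, n, funext fun e => ?_, funext fun j => ?_⟩
  · obtain ⟨t, rfl⟩ := ZMod.natCast_zmod_surjective e
    rw [Pi.add_apply, halfShift_apply, ← Nat.cast_succ, hX, hX]
    exact hX₁ t
  · obtain ⟨t, rfl⟩ := ZMod.natCast_zmod_surjective j
    rw [Pi.add_apply, projHalf_natCast hk, ← Nat.cast_add, hX, hX]
    exact hX₂ t

end

def d₀ (k : ℕ) (n : ℤ) : (ZMod k → ℤ) × ℤ := (fun _ => n, -2 * n)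

def d₁ (k : ℕ) (p : (ZMod k → ℤ) × ℤ) : (ZMod k → ℤ) × (ZMod (k / 2) → ℤ) :=
  (halfShift k p.1 + fun _ => p.2, projHalf k p.1 + fun _ => p.2)

def d₂ (k : ℕ) (p : (ZMod k → ℤ) × (ZMod (k / 2) → ℤ)) : ZMod (k / 2) → ℤ :=
  projHalf k p.1 - halfShift (k / 2) p.2

theorem d₀_injective (k : ℕ) : Injective (d₀ k) := fun a b h => by
  have := congrArg Prod.snd h
  simp only [d₀] at this
  omega

section

variable {k : ℕ} [NeZero k]

theorem exact_d₀_d₁ (h4 : 4 ∣ k) : Exact (d₀ k) (d₁ k) := by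
  intro p
  constructor
  · intro h
    obtain ⟨hx, hn⟩ := eq_const_of_halfShift_add_eq_zero h4 (congrArg Prod.fst h)
      (congrArg Prod.snd h)
    exact ⟨p.1 0, Prod.ext hx.symm hn.symm⟩
  · rintro ⟨c, rfl⟩
    simp only [d₀, d₁, halfShift_const, projHalf_const]
    ext <;> simp

theorem exact_d₁_d₂ (h4 : 4 ∣ k) : Exact (d₁ k) (d₂ k) := by
  have hk : Even k := ⟨k / 2, by omega⟩
  rintro ⟨y, z⟩
  constructor
  · intro h
    obtain ⟨x₁, rfl⟩ := projHalf_surjective hk z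
    obtain ⟨x, n, hx₁, hx₂⟩ := exists_halfShift_add_eq_of_projHalf_eq_zero h4
      (y := y - halfShift k x₁) (by rw [map_sub, projHalf_halfShift hk]; exact h)
    refine ⟨(x + x₁, n), Prod.ext ?_ ?_⟩
    · change halfShift k (x + x₁) + _ = y
      rw [map_add, add_right_comm, hx₁, sub_add_cancel]
    · change projHalf k (x + x₁) + _ = projHalf k x₁
      rw [map_add, add_right_comm, hx₂, zero_add]
  · rintro ⟨⟨x, n⟩, h⟩
    rw [← h]
    change projHalf k (halfShift k x + _) - halfShift (k / 2) (projHalf k x + _) = 0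
    rw [map_add, map_add, projHalf_halfShift hk, projHalf_const, halfShift_const]
    abel

theorem d₂_surjective (hk : Even k) : Surjective (d₂ k) := fun w => by
  obtain ⟨y, rfl⟩ := projHalf_surjective hk w
  exact ⟨(y, 0), by rw [d₂, map_zero, sub_zero]⟩

end

end DihedralQuadruple

/-- The dihedral exact quadruple.  For `4 ∣ k`, the vertices of the regular `k`-gon
are modelled as `ZMod k`, the edges as `ZMod k` (edge `e = {e, e+1}`), the rotation
`σ` acts by `+1`, `Π = {0, k/2}`, and the `Π`-orbit spaces are `ZMod (k/2)` with
lift `j ↦ j.val`.  In this model, `ℤ[Δ'] = ℤ[Δ''] = (ZMod k → ℤ)` and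
`ℤ[Δ'/Π] = ℤ[Δ''/Π] = (ZMod (k/2) → ℤ)`; the half-shift operator
`σ^{-1/2} + σ^{1/2} : ℤ[Δ'] → ℤ[Δ'']` is `x ↦ (e ↦ x e + x (e+1))`, and
`pr_Π(x)(j) = x(ĵ) + x(ĵ + k/2)`.  The quadruple
`0 → ℤ → ℤ[Δ']⊕ℤ → ℤ[Δ'']⊕ℤ[Δ'/Π] → ℤ[Δ''/Π] → 0` with maps `1 ↦ (#Δ', -2)`,
`(x,n) ↦ ((σ^{-1/2}+σ^{1/2})x + n·#Δ'', pr_Π(x) + n·#(Δ'/Π))`,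
`(y,z̄) ↦ pr_Π(y) - (σ̄^{-1/2}+σ̄^{1/2})z̄` is exact. -/
theorem stmt_12 (k : ℕ) (hk : 0 < k) (h4 : 4 ∣ k)
    (d₀ : ℤ → (ZMod k → ℤ) × ℤ)
    (hd₀ : ∀ n : ℤ, d₀ n = (fun _ => n, -2 * n))
    (d₁ : (ZMod k → ℤ) × ℤ → (ZMod k → ℤ) × (ZMod (k / 2) → ℤ))
    (hd₁ : ∀ x : (ZMod k → ℤ) × ℤ, d₁ x =
      (fun e => x.1 e + x.1 (e + 1) + x.2,
       fun j => x.1 ((j.val : ℕ) : ZMod k) +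
         x.1 (((j.val : ℕ) : ZMod k) + ((k / 2 : ℕ) : ZMod k)) + x.2))
    (d₂ : (ZMod k → ℤ) × (ZMod (k / 2) → ℤ) → (ZMod (k / 2) → ℤ))
    (hd₂ : ∀ y : (ZMod k → ℤ) × (ZMod (k / 2) → ℤ), d₂ y =
      fun j => y.1 ((j.val : ℕ) : ZMod k) +
        y.1 (((j.val : ℕ) : ZMod k) + ((k / 2 : ℕ) : ZMod k)) -
        (y.2 j + y.2 (j + 1))) :
    Function.Injective d₀ ∧ Function.Exact d₀ d₁ ∧ Function.Exact d₁ d₂ ∧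
      Function.Surjective d₂ := by
  have : NeZero k := ⟨hk.ne'⟩
  obtain rfl : d₀ = DihedralQuadruple.d₀ k := funext hd₀
  obtain rfl : d₁ = DihedralQuadruple.d₁ k := funext hd₁
  obtain rfl : d₂ = DihedralQuadruple.d₂ k := funext hd₂
  exact ⟨DihedralQuadruple.d₀_injective k, DihedralQuadruple.exact_d₀_d₁ h4,
    DihedralQuadruple.exact_d₁_d₂ h4, DihedralQuadruple.d₂_surjective ⟨k / 2, by omega⟩⟩
end
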